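/- If u is a derivation of the free associative algebra ℝ⟨x,y⟩ with u([x,y]) = 0 and u is homogeneous of total degree n (i.e., u(x) and u(y) have word length n−1, with n ≥ 1), then u = Φ(f) for the cyclic word f = (1/n)·tr(y·u(x) − x·u(y)). -/

import Mathlib

noncomputable section
open TensorProduct

abbrev A : Type := FreeAlgebra ℝ (Fin 2)
abbrev B : Type := A ⊗[ℝ] A

def X : A := FreeAlgebra.ι ℝ 0
def Y : A := FreeAlgebra.ι ℝ 1

/-- Generator matrices used to define the noncommutative partial derivative `pd d`. -/
def genMat (d i : Fin 2) : Matrix (Fin 2) (Fin 2) B :=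
  !![(Algebra.TensorProduct.includeLeft : A →ₐ[ℝ] B) (FreeAlgebra.ι ℝ i), if i = d then 1 else 0;
     0, Algebra.TensorProduct.includeRight (FreeAlgebra.ι ℝ i)]

def Φmat (d : Fin 2) : A →ₐ[ℝ] Matrix (Fin 2) (Fin 2) B :=
  FreeAlgebra.lift ℝ (genMat d)

/-- The noncommutative partial derivative `∂_x` (for `d = 0`) resp. `∂_y` (for `d = 1`):
on a monomial it splits the word at each occurrence of the letter `d`. -/
def pd (d : Fin 2) (a : A) : B := Φmat d a 0 1

/-- The subspace `[A,A]` spanned by commutators; `tr(A) = A/[A,A]` is the trace space. -/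
def commSub : Submodule ℝ A := Submodule.span ℝ {p : A | ∃ a b : A, p = a * b - b * a}

/-- The trace projection `tr : A → A/[A,A]`. -/
def trc (a : A) : A ⧸ commSub := Submodule.Quotient.mk a

/-- Reversed multiplication `μ_flip : A ⊗ A → A`, `b ⊗ c ↦ c·b`. -/
def flipMul : B →ₗ[ℝ] A :=
  (LinearMap.mul' ℝ A).comp (TensorProduct.comm ℝ A A).toLinearMap

/-- The word `a₁ ⋯ aₙ` in `A` associated to a list of letters. -/
def word (w : List (Fin 2)) : A := (w.map (FreeAlgebra.ι ℝ)).prod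

/-! Write `g = y·u(x) − x·u(y)`. By the Leibniz rule, `u([x,y]) = 0` says
`u(x)·y − u(y)·x = g`, i.e. `g` is invariant under cyclic rotation of words. On a word of
length `n`, the cyclic derivative `∂_d^{tr}` is the sum over the `n` rotations of the word of
"strip a leading `d`". For the rotation-invariant `g`, homogeneous of length `n`, this is `n`
times stripping the leading `d` of `g` itself, which yields `u(x)` for `d = y` and `−u(y)` for
`d = x`. -/

namespace FreeAlgebra

variable {R α : Type*} [CommSemiring R]

theorem basisFreeMonoid_ofList (l : List α) :
    basisFreeMonoid R α (FreeMonoid.ofList l) = (l.map (ι R)).prod := by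
  simp [basisFreeMonoid, equivMonoidAlgebraFreeMonoid, Finsupp.coe_basisSingleOne,
    FreeMonoid.lift_ofList]

variable (R) in
def wordsOfLength (n : ℕ) : Set (FreeAlgebra R α) :=
  {p | ∃ w : List α, w.length = n ∧ p = (w.map (ι R)).prod}

theorem ι_mul_mem_span_wordsOfLength (x : α) {n : ℕ} {a : FreeAlgebra R α}
    (ha : a ∈ Submodule.span R (wordsOfLength R n)) :
    ι R x * a ∈ Submodule.span R (wordsOfLength R (n + 1)) := by
  have hmap : Submodule.span R (wordsOfLength R n) ≤
      (Submodule.span R (wordsOfLength R (n + 1))).comap (LinearMap.mulLeft R (ι R x)) := by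
    refine Submodule.span_le.mpr ?_
    rintro _ ⟨w, rfl, rfl⟩
    exact Submodule.subset_span ⟨x :: w, rfl, by simp⟩
  exact hmap ha

def rotateWord : FreeAlgebra R α →ₗ[R] FreeAlgebra R α :=
  (basisFreeMonoid R α).constr R fun m => ((m.toList.rotate 1).map (ι R)).prod

theorem rotateWord_prod (l : List α) :
    rotateWord ((l.map (ι R)).prod) = ((l.rotate 1).map (ι R)).prod := by
  rw [← basisFreeMonoid_ofList, rotateWord, Module.Basis.constr_basis,
    FreeMonoid.toList_ofList]

theorem rotateWord_pow_prod (k : ℕ) (l : List α) :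
    (rotateWord ^ k) ((l.map (ι R)).prod) = ((l.rotate k).map (ι R)).prod := by
  induction k generalizing l with
  | zero => simp
  | succ k ih => rw [pow_succ', Module.End.mul_apply, ih, rotateWord_prod, List.rotate_rotate]

theorem rotateWord_ι_mul (x : α) (a : FreeAlgebra R α) :
    rotateWord (ι R x * a) = a * ι R x := by
  suffices rotateWord ∘ₗ LinearMap.mulLeft R (ι R x) = LinearMap.mulRight R (ι R x) from
    LinearMap.congr_fun this a
  refine (basisFreeMonoid R α).ext fun m => ?_
  rw [← FreeMonoid.ofList_toList m]
  simp only [LinearMap.comp_apply, LinearMap.mulLeft_apply, LinearMap.mulRight_apply,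
    basisFreeMonoid_ofList]
  rw [← List.prod_cons, ← List.map_cons, rotateWord_prod, List.rotate_cons_succ,
    List.rotate_zero]
  simp

variable [DecidableEq α]

def stripLeft (x : α) : FreeAlgebra R α →ₗ[R] FreeAlgebra R α :=
  (basisFreeMonoid R α).constr R fun m =>
    if m.toList.head? = some x then (m.toList.tail.map (ι R)).prod else 0

theorem stripLeft_prod (x : α) (l : List α) :
    stripLeft x ((l.map (ι R)).prod) =
      if l.head? = some x then (l.tail.map (ι R)).prod else 0 := by
  rw [← basisFreeMonoid_ofList, stripLeft, Module.Basis.constr_basis, FreeMonoid.toList_ofList]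

theorem stripLeft_ι_mul (x y : α) (a : FreeAlgebra R α) :
    stripLeft x (ι R y * a) = if y = x then a else 0 := by
  suffices stripLeft x ∘ₗ LinearMap.mulLeft R (ι R y) = if y = x then LinearMap.id else 0 by
    rw [← LinearMap.mulLeft_apply (R := R), ← LinearMap.comp_apply, this]
    split_ifs <;> rfl
  refine (basisFreeMonoid R α).ext fun m => ?_
  rw [← FreeMonoid.ofList_toList m]
  simp only [LinearMap.comp_apply, LinearMap.mulLeft_apply, basisFreeMonoid_ofList]
  rw [← List.prod_cons, ← List.map_cons, stripLeft_prod]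
  split_ifs <;> simp_all

end FreeAlgebra

open FreeAlgebra

theorem word_cons (i : Fin 2) (w : List (Fin 2)) :
    word (i :: w) = FreeAlgebra.ι ℝ i * word w := by
  simp [word]

theorem Φmat_apply (d : Fin 2) (a : A) : Φmat d a = !![a ⊗ₜ 1, pd d a; 0, 1 ⊗ₜ a] := by
  suffices Φmat d a 0 0 = a ⊗ₜ 1 ∧ Φmat d a 1 0 = 0 ∧ Φmat d a 1 1 = 1 ⊗ₜ a by
    obtain ⟨h00, h10, h11⟩ := this
    rw [Matrix.eta_fin_two (Φmat d a), h00, h10, h11]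
    rfl
  induction a using FreeAlgebra.induction with
  | grade0 r =>
    simp [Algebra.algebraMap_eq_smul_one, Algebra.TensorProduct.one_def,
      TensorProduct.smul_tmul']
  | grade1 i => simp [Φmat, genMat]
  | mul a b ha hb =>
    simp [Matrix.mul_apply, Fin.sum_univ_two, ha, hb]
  | add a b ha hb =>
    simp [ha, hb, TensorProduct.add_tmul, TensorProduct.tmul_add]

theorem pd_mul (d : Fin 2) (a b : A) :
    pd d (a * b) = (a ⊗ₜ 1) * pd d b + pd d a * (1 ⊗ₜ b) := by
  rw [pd, map_mul, Φmat_apply d a, Φmat_apply d b]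
  simp [Matrix.mul_apply, Fin.sum_univ_two]

theorem pd_ι (d i : Fin 2) : pd d (FreeAlgebra.ι ℝ i) = if i = d then 1 else 0 := by
  simp [pd, Φmat, genMat]

theorem pd_one (d : Fin 2) : pd d 1 = 0 := by
  simp [pd]

theorem pd_word (d : Fin 2) (w : List (Fin 2)) :
    pd d (word w) = ∑ k ∈ Finset.range w.length,
      if w[k]? = some d then word (w.take k) ⊗ₜ word (w.drop (k + 1)) else 0 := by
  induction w with
  | nil => exact pd_one d
  | cons i t ih =>
    rw [word_cons, pd_mul, ih, Finset.mul_sum, List.length_cons, Finset.sum_range_succ']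
    congr 1
    · refine Finset.sum_congr rfl fun k _ => ?_
      rw [List.getElem?_cons_succ, List.take_succ_cons, List.drop_succ_cons, word_cons,
        mul_ite, mul_zero, Algebra.TensorProduct.tmul_mul_tmul, one_mul]
    · by_cases h : i = d <;> simp [h, pd_ι, Algebra.TensorProduct.one_def, word]

/-- `∂_d^{tr} ∘ tr = μ_flip ∘ ∂_d` in the paper's notation. -/
def cyclicDeriv (d : Fin 2) : A →ₗ[ℝ] A :=
  flipMul ∘ₗ Matrix.entryLinearMap ℝ B 0 1 ∘ₗ (Φmat d).toLinearMap

theorem cyclicDeriv_apply (d : Fin 2) (a : A) : cyclicDeriv d a = flipMul (pd d a) := rfl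

theorem cyclicDeriv_word (d : Fin 2) (w : List (Fin 2)) :
    cyclicDeriv d (word w) = ∑ k ∈ Finset.range w.length, stripLeft d (word (w.rotate k)) := by
  rw [cyclicDeriv_apply, pd_word, map_sum]
  refine Finset.sum_congr rfl fun k hk => ?_
  have hk : k < w.length := Finset.mem_range.mp hk
  have hrot : w.rotate k = w[k] :: (w.drop (k + 1) ++ w.take k) := by
    rw [List.rotate_eq_drop_append_take hk.le, List.drop_eq_getElem_cons hk, List.cons_append]
  rw [hrot, List.getElem?_eq_getElem hk]
  unfold word
  rw [stripLeft_prod]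
  split_ifs <;> simp_all [flipMul]

theorem cyclicDeriv_eq_sum_stripLeft_rotateWord (d : Fin 2) {n : ℕ} {g : A}
    (hg : g ∈ Submodule.span ℝ (wordsOfLength ℝ n)) :
    cyclicDeriv d g = ∑ k ∈ Finset.range n, stripLeft d ((rotateWord ^ k) g) := by
  have hspan : Set.EqOn (cyclicDeriv d)
      (∑ k ∈ Finset.range n, stripLeft d ∘ₗ rotateWord ^ k : A →ₗ[ℝ] A)
      (wordsOfLength ℝ n) := by
    rintro _ ⟨w, rfl, rfl⟩
    simp only [LinearMap.sum_apply, LinearMap.comp_apply, rotateWord_pow_prod]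
    exact cyclicDeriv_word d w
  simpa using LinearMap.eqOn_span' hspan hg

theorem cyclicDeriv_eq_nsmul_stripLeft (d : Fin 2) {n : ℕ} {g : A}
    (hg : g ∈ Submodule.span ℝ (wordsOfLength ℝ n)) (hrot : rotateWord g = g) :
    cyclicDeriv d g = n • stripLeft d g := by
  have hrot_pow (k : ℕ) : (rotateWord ^ k) g = g := by
    induction k with
    | zero => rfl
    | succ k ih => rw [pow_succ', Module.End.mul_apply, ih, hrot]
  simp [cyclicDeriv_eq_sum_stripLeft_rotateWord d hg, hrot_pow]

theorem rotateWord_Y_mul_sub_X_mul_eq_self {u : A →ₗ[ℝ] A}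
    (hu : ∀ a b : A, u (a * b) = u a * b + a * u b) (hω : u (X * Y - Y * X) = 0) :
    rotateWord (Y * u X - X * u Y) = Y * u X - X * u Y := by
  rw [map_sub, hu, hu] at hω
  unfold X Y at hω ⊢
  rw [map_sub, rotateWord_ι_mul, rotateWord_ι_mul, ← sub_eq_zero, ← hω]
  abel

/-- If `u` is a derivation of `A = ℝ⟨x,y⟩` with `u([x,y]) = 0`, homogeneous of total
degree `n ≥ 1` (i.e. `u(x)` and `u(y)` are combinations of words of length `n − 1`),
then `u = Φ(f)` for the cyclic word `f = (1/n)·tr(y·u(x) − x·u(y))`, i.e.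
`u(x) = ∂_y^{tr}(f)` and `u(y) = −∂_x^{tr}(f)`. -/
theorem symplectic_derivation_from_cyclic_word
    (n : ℕ) (hn : 1 ≤ n)
    (u : A →ₗ[ℝ] A)
    (hu : ∀ a b : A, u (a * b) = u a * b + a * u b)
    (hω : u (X * Y - Y * X) = 0)
    (hux : u X ∈ Submodule.span ℝ
      {p : A | ∃ w : List (Fin 2), w.length = n - 1 ∧ p = word w})
    (huy : u Y ∈ Submodule.span ℝ
      {p : A | ∃ w : List (Fin 2), w.length = n - 1 ∧ p = word w})
    (Dx Dy : (A ⧸ commSub) →ₗ[ℝ] A)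
    (hDx : ∀ a : A, Dx (trc a) = flipMul (pd 0 a))
    (hDy : ∀ a : A, Dy (trc a) = flipMul (pd 1 a)) :
    u X = Dy ((n : ℝ)⁻¹ • trc (Y * u X - X * u Y)) ∧
      u Y = -(Dx ((n : ℝ)⁻¹ • trc (Y * u X - X * u Y))) := by
  set g := Y * u X - X * u Y
  have hg : g ∈ Submodule.span ℝ (wordsOfLength ℝ n) := by
    have h := Submodule.sub_mem _ (ι_mul_mem_span_wordsOfLength 1 hux)
      (ι_mul_mem_span_wordsOfLength 0 huy)
    rwa [Nat.sub_add_cancel hn] at h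
  have hcyc (d : Fin 2) : (n : ℝ)⁻¹ • flipMul (pd d g) = stripLeft d g := by
    rw [← cyclicDeriv_apply,
      cyclicDeriv_eq_nsmul_stripLeft d hg (rotateWord_Y_mul_sub_X_mul_eq_self hu hω),
      ← Nat.cast_smul_eq_nsmul ℝ, inv_smul_smul₀ (by positivity)]
  constructor
  · rw [map_smul, hDy, hcyc]
    simp [g, X, Y, stripLeft_ι_mul]
  · rw [map_smul, hDx, hcyc]
    simp [g, X, Y, stripLeft_ι_mul]
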